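/- Let X be a T1 space and f, g be distinct nonzero zero divisors in C(X)_F. Then d(f,g) = 3 in Γ(C(X)_F) if and only if Z(f) ∪ Z(g) ≠ X and Z(f) ∩ Z(g) = ∅. -/

import Mathlib

open SimpleGraph

/-- `f` belongs to `C(X)_F` : it is continuous outside some finite set. -/
def CF (X : Type*) [TopologicalSpace X] (f : X → ℝ) : Prop :=
  ∃ F : Set X, F.Finite ∧ ContinuousOn f Fᶜ

/-- `f` is a nonzero zero divisor of the ring `C(X)_F`. -/
def ZD (X : Type*) [TopologicalSpace X] (f : X → ℝ) : Prop :=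
  CF X f ∧ f ≠ 0 ∧ ∃ g : X → ℝ, CF X g ∧ g ≠ 0 ∧ f * g = 0

/-- The vertex set of the zero divisor graph of `C(X)_F`. -/
def Vtx (X : Type*) [TopologicalSpace X] := {f : X → ℝ // ZD X f}

/-- The zero divisor graph `Γ(C(X)_F)`: vertices are the nonzero zero divisors,
`f` and `g` adjacent iff `f ≠ g` and `f * g = 0`. -/
def Γ (X : Type*) [TopologicalSpace X] : SimpleGraph (Vtx X) where
  Adj f g := f ≠ g ∧ (f.1 * g.1 = 0)
  symm := ⟨fun f g ⟨h1, h2⟩ => ⟨h1.symm, by rw [mul_comm] at h2; exact h2⟩⟩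
  loopless := ⟨fun f ⟨h, _⟩ => h rfl⟩

/-- The zero set of a function. -/
def Z {X : Type*} (f : X → ℝ) : Set X := {x | f x = 0}

/-- The characteristic function of a point. -/
noncomputable def chi {X : Type*} (x : X) : X → ℝ := Set.indicator {x} (fun _ => 1)

lemma chi_apply_self {X : Type*} (x : X) : chi x x = 1 := by
  simp [chi]

lemma chi_apply_ne {X : Type*} {x y : X} (h : y ≠ x) : chi x y = 0 := by
  simp [chi, h]

lemma CF_chi {X : Type*} [TopologicalSpace X] (x : X) : CF X (chi x) := by
  refine ⟨{x}, Set.finite_singleton x, ?_⟩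
  refine (continuousOn_const (c := (0:ℝ))).congr ?_
  intro y hy
  exact chi_apply_ne (by simpa using hy)

lemma chi_ne_zero {X : Type*} (x : X) : chi x ≠ 0 := by
  intro h
  have := congrFun h x
  rw [chi_apply_self] at this
  simp at this

lemma chi_mul_chi {X : Type*} {x y : X} (h : x ≠ y) : chi x * chi y = 0 := by
  funext z
  by_cases hz : z = x
  · subst hz
    simp [Pi.mul_apply, chi_apply_ne h]
  · simp [Pi.mul_apply, chi_apply_ne hz]

lemma mul_chi {X : Type*} {f : X → ℝ} {x : X} (hf : f x = 0) : f * chi x = 0 := by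
  funext z
  by_cases hz : z = x
  · subst hz
    simp [Pi.mul_apply, hf]
  · simp [Pi.mul_apply, chi_apply_ne hz]

lemma ZD_chi {X : Type*} [TopologicalSpace X] {x y : X} (h : x ≠ y) : ZD X (chi x) :=
  ⟨CF_chi x, chi_ne_zero x, chi y, CF_chi y, chi_ne_zero y, chi_mul_chi h⟩

lemma ne_chi {X : Type*} {f : X → ℝ} {x : X} (hf : f x = 0) : f ≠ chi x := by
  intro h
  have := congrFun h x
  rw [chi_apply_self, hf] at this
  exact one_ne_zero this.symm

lemma exists_zero {X : Type*} [TopologicalSpace X] {f : X → ℝ} (hf : ZD X f) :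
    ∃ x, f x = 0 := by
  obtain ⟨-, -, g, -, hg0, hfg⟩ := hf
  obtain ⟨z, hz⟩ := Function.ne_iff.mp hg0
  have hz' : g z ≠ 0 := by simpa using hz
  have := congrFun hfg z
  simp only [Pi.mul_apply, Pi.zero_apply, mul_eq_zero] at this
  exact ⟨z, this.resolve_right hz'⟩

/-- For distinct vertices `f, g` of `Γ(C(X)_F)`, `d(f,g) = 3` iff
`Z(f) ∪ Z(g) ≠ X` and `Z(f) ∩ Z(g) = ∅`. -/
theorem stmt11 {X : Type*} [TopologicalSpace X] [T1Space X]
    (f g : Vtx X) (hfg : f ≠ g) :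
    (Γ X).dist f g = 3 ↔
      (Z f.1 ∪ Z g.1 ≠ Set.univ ∧ Z f.1 ∩ Z g.1 = ∅) := by
  constructor
  · intro hd
    constructor
    · intro hU
      have hmul : f.1 * g.1 = 0 := by
        funext z
        have hz : z ∈ Z f.1 ∪ Z g.1 := hU ▸ Set.mem_univ z
        rcases hz with h | h
        · simp [Pi.mul_apply, show f.1 z = 0 from h]
        · simp [Pi.mul_apply, show g.1 z = 0 from h]
      have hadj : (Γ X).Adj f g := ⟨hfg, hmul⟩
      have h1 : (Γ X).dist f g = 1 := SimpleGraph.dist_eq_one_iff_adj.mpr hadj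
      omega
    · by_contra hne
      obtain ⟨x, hxf, hxg⟩ := Set.nonempty_iff_ne_empty.mpr hne
      have hxf : f.1 x = 0 := hxf
      have hxg : g.1 x = 0 := hxg
      obtain ⟨w, hw⟩ := Function.ne_iff.mp f.2.2.1
      have hw' : f.1 w ≠ 0 := by simpa using hw
      have hxw : x ≠ w := fun h => hw' (h ▸ hxf)
      set v : Vtx X := ⟨chi x, ZD_chi hxw⟩ with hv
      have hadj1 : (Γ X).Adj f v :=
        ⟨fun h => ne_chi hxf (congrArg Subtype.val h), mul_chi hxf⟩
      have hadj2 : (Γ X).Adj v g :=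
        ⟨fun h => ne_chi hxg (congrArg Subtype.val h.symm), by
          rw [mul_comm]; exact mul_chi hxg⟩
      have hle : (Γ X).dist f g ≤ 2 := by
        have := SimpleGraph.dist_le (SimpleGraph.Walk.cons hadj1
          (SimpleGraph.Walk.cons hadj2 SimpleGraph.Walk.nil))
        simpa using this
      omega
  · rintro ⟨hU, hI⟩
    obtain ⟨x, hx⟩ := exists_zero f.2
    obtain ⟨y, hy⟩ := exists_zero g.2
    have hxy : x ≠ y := by
      intro h
      subst h
      have hmem : x ∈ Z f.1 ∩ Z g.1 := ⟨hx, hy⟩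
      rw [hI] at hmem
      exact hmem
    set vx : Vtx X := ⟨chi x, ZD_chi hxy⟩ with hvx
    set vy : Vtx X := ⟨chi y, ZD_chi hxy.symm⟩ with hvy
    have hadj1 : (Γ X).Adj f vx :=
      ⟨fun h => ne_chi hx (congrArg Subtype.val h), mul_chi hx⟩
    have hadj2 : (Γ X).Adj vx vy :=
      ⟨fun h => by
        have h2 := congrFun (congrArg Subtype.val h) x
        rw [show (vx : Vtx X).1 x = 1 from chi_apply_self x,
          show (vy : Vtx X).1 x = 0 from chi_apply_ne hxy] at h2
        exact one_ne_zero h2, chi_mul_chi hxy⟩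
    have hadj3 : (Γ X).Adj vy g :=
      ⟨fun h => ne_chi hy (congrArg Subtype.val h.symm), by
        rw [mul_comm]; exact mul_chi hy⟩
    let p : (Γ X).Walk f g :=
      SimpleGraph.Walk.cons hadj1 (SimpleGraph.Walk.cons hadj2
        (SimpleGraph.Walk.cons hadj3 SimpleGraph.Walk.nil))
    have hle : (Γ X).dist f g ≤ 3 := by
      have := SimpleGraph.dist_le p
      simpa [p] using this
    have hfgmul : f.1 * g.1 ≠ 0 := by
      obtain ⟨z, hz⟩ := (Set.ne_univ_iff_exists_notMem _).mp hU
      intro h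
      have h2 := congrFun h z
      simp only [Pi.mul_apply, Pi.zero_apply, mul_eq_zero] at h2
      rcases h2 with h' | h'
      · exact hz (Or.inl h')
      · exact hz (Or.inr h')
    have hlow : ∀ q : (Γ X).Walk f g, 3 ≤ q.length := by
      intro q
      cases q with
      | nil => exact absurd rfl hfg
      | cons h q' =>
        cases q' with
        | nil => exact absurd h.2 hfgmul
        | cons h' q'' =>
          cases q'' with
          | nil =>
            exfalso
            rename_i b
            obtain ⟨z, hz⟩ := Function.ne_iff.mp b.2.2.1
            have hz' : b.1 z ≠ 0 := by simpa using hz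
            have e1 := congrFun h.2 z
            have e2 := congrFun h'.2 z
            simp only [Pi.mul_apply, Pi.zero_apply, mul_eq_zero] at e1 e2
            have hfz : f.1 z = 0 := e1.resolve_right hz'
            have hgz : g.1 z = 0 := e2.resolve_left hz'
            have hmem : z ∈ Z f.1 ∩ Z g.1 := ⟨hfz, hgz⟩
            rw [hI] at hmem
            exact hmem
          | cons h'' q''' =>
            simp only [SimpleGraph.Walk.length_cons]
            omega
    obtain ⟨q, hq⟩ := (p.reachable).exists_walk_length_eq_dist
    have := hlow q
    omega
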